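/- (Dade's theorem for inverse semigroups.) Let S be a Γ-graded inverse semigroup. Then S is strongly graded if and only if the categories Gr-S and Mod-S_ε are equivalent via the restriction functor (−)_ε : Gr-S → Mod-S_ε and the induction functor S ⊗_{S_ε} − : Mod-S_ε → Gr-S, with natural isomorphisms μ_Y : (S ⊗_{S_ε} Y)_ε → Y, s⊗y ↦ sy, and ν_X : S ⊗_{S_ε} X_ε → X, s⊗x ↦ sx. Equivalently, S is strongly graded if and only if ν_X is bijective for every object X of Gr-S. -/

import Mathlib

open Pointwise

/-- A `Γ`-grading on a semigroup with zero `S`. -/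
structure Grading (Γ : Type*) [Group Γ] (S : Type*) [SemigroupWithZero S] where
  deg : S → Γ
  deg_mul : ∀ s t : S, s * t ≠ 0 → deg (s * t) = deg s * deg t

namespace Grading

variable {Γ : Type*} [Group Γ] {S : Type*} [SemigroupWithZero S]

/-- The component `S_α = φ⁻¹(α) ∪ {0}` of a `Γ`-graded semigroup. -/
def comp (g : Grading Γ S) (α : Γ) : Set S := {s | s = 0 ∨ g.deg s = α}

/-- `S` is strongly graded if `S_α S_β = S_{αβ}` for all `α, β ∈ Γ`. -/
def IsStrong (g : Grading Γ S) : Prop :=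
  ∀ α β : Γ, g.comp α * g.comp β = g.comp (α * β)

end Grading

/-- A `Γ`-graded pointed left `S`-set. -/
structure GrSet {Γ : Type u} [Group Γ] {S : Type w} [SemigroupWithZero S]
    (g : Grading Γ S) (X : Type v) [Zero X] where
  act : S → X → X
  act_mul : ∀ (s t : S) (x : X), act s (act t x) = act (s * t) x
  act_zero : ∀ x : X, act 0 x = 0
  degX : X → Γ
  deg_act : ∀ (s : S) (x : X), act s x ≠ 0 → degX (act s x) = g.deg s * degX x

variable {Γ : Type u} [Group Γ] {S : Type w} [SemigroupWithZero S]

/-- The relation defining the tensor product `S ⊗_{S_ε} X_ε`: `(a s, x) ∼ (a, s x)`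
for `s ∈ S_ε` and `x ∈ X_ε`. -/
def nuRel {X : Type v} [Zero X] {g : Grading Γ S} (A : GrSet g X) :
    (S × {x : X // x = 0 ∨ A.degX x = 1}) → (S × {x : X // x = 0 ∨ A.degX x = 1}) → Prop :=
  fun p q => ∃ s : S, (s = 0 ∨ g.deg s = 1) ∧ p.1 = q.1 * s ∧ (q.2 : X) = A.act s (p.2 : X)

/-- The canonical map `ν_X : S ⊗_{S_ε} X_ε → X`, `s ⊗ x ↦ s x`. -/
def nuMap {X : Type v} [Zero X] {g : Grading Γ S} (A : GrSet g X) :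
    Quot (nuRel A) → X :=
  Quot.lift (fun p => A.act p.1 (p.2 : X)) (by
    rintro ⟨a, x⟩ ⟨b, y⟩ ⟨s, -, h1, h2⟩
    dsimp only at h1 h2 ⊢
    rw [h1, h2]
    exact (A.act_mul b s (x : X)).symm)

/-!
Injectivity of `ν_X` holds in every graded inverse semigroup: if `a x = b y ≠ 0` with
`x, y ∈ X_ε`, then `deg a = deg b`, so `a'b ∈ S_ε` and `a ⊗ x = a a' b ⊗ y`; since the
idempotents `a a'` and `b b'` commute, `a a' b = b (b' a a' b)` with `b' a a' b ∈ S_ε`, which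
moves the tensor to `b ⊗ y`. Strong grading gives surjectivity: for `x = s y` with
`deg y = δ`, write `s' s = p q` with `p ∈ S_δ`, `q ∈ S_{δ⁻¹}`; then `x = s p ⊗ q y`.
Conversely, surjectivity of `ν` for `S` with its grading shifted by `β` splits every
`r ∈ S_{αβ}` as `r = s u` with `u ∈ S_β`, hence `s ∈ S_α`.
-/

def IsInverseSemigroup (M : Type*) [Semigroup M] : Prop :=
  ∀ s : M, ∃! t : M, s * t * s = s ∧ t * s * t = t

namespace IsInverseSemigroup

variable {M : Type*} [Semigroup M] {e f : M}

theorem exists_mul_mul_self (h : IsInverseSemigroup M) (s : M) : ∃ t, s * t * s = s :=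
  (h s).exists.imp fun _ ht => ht.1

theorem isIdempotentElem_mul (h : IsInverseSemigroup M) (he : IsIdempotentElem e)
    (hf : IsIdempotentElem f) : IsIdempotentElem (e * f) := by
  obtain ⟨a, ⟨h1, h2⟩, ha_unique⟩ := h (e * f)
  have h1' : e * (f * (a * (e * f))) = e * f := by simpa only [mul_assoc] using h1
  have h2' (x : M) : a * (e * (f * (a * x))) = a * x := by
    simpa only [mul_assoc] using congrArg (· * x) h2
  have hfae : f * a * e = a := ha_unique _
    ⟨by simp only [mul_assoc, he.mul_self_mul, hf.mul_self_mul, h1'],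
     by simp only [mul_assoc, he.mul_self_mul, hf.mul_self_mul, h2']⟩
  have ha : IsIdempotentElem a :=
    calc a * a = f * a * e * (f * a * e) := by rw [hfae]
      _ = a := by simp only [mul_assoc, h2']; simp only [← mul_assoc, hfae]
  -- both `e * f` and `a` are inverses of `a`
  obtain ⟨c, -, hc⟩ := h a
  have hef : e * f = a :=
    (hc _ ⟨h2, h1⟩).trans (hc _ ⟨by rw [ha.eq, ha.eq], by rw [ha.eq, ha.eq]⟩).symm
  rw [IsIdempotentElem, hef, ha.eq]

theorem commute_of_isIdempotentElem (h : IsInverseSemigroup M) (he : IsIdempotentElem e)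
    (hf : IsIdempotentElem f) : Commute e f := by
  have hef := (h.isIdempotentElem_mul he hf).eq
  have hfe := (h.isIdempotentElem_mul hf he).eq
  -- both `e * f` and `f * e` are inverses of `e * f`
  obtain ⟨c, -, hc⟩ := h (e * f)
  refine (hc _ ⟨?_, ?_⟩).trans (hc _ ⟨?_, ?_⟩).symm
  · rw [hef, hef]
  · rw [hef, hef]
  · simpa only [mul_assoc, he.mul_self_mul, hf.mul_self_mul] using hef
  · simpa only [mul_assoc, he.mul_self_mul, hf.mul_self_mul] using hfe

end IsInverseSemigroup

namespace Grading

variable {g : Grading Γ S} {α β : Γ} {s t : S}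

theorem zero_mem_comp (α : Γ) : (0 : S) ∈ g.comp α := Or.inl rfl

theorem mem_comp_deg (s : S) : s ∈ g.comp (g.deg s) := Or.inr rfl

theorem mul_mem_comp (hs : s ∈ g.comp α) (ht : t ∈ g.comp β) :
    s * t ∈ g.comp (α * β) := by
  by_cases hst : s * t = 0
  · exact Or.inl hst
  have hs0 : s ≠ 0 := by rintro rfl; exact hst (zero_mul t)
  have ht0 : t ≠ 0 := by rintro rfl; exact hst (mul_zero s)
  exact Or.inr (by rw [g.deg_mul s t hst, hs.resolve_left hs0, ht.resolve_left ht0])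

theorem comp_mul_comp_subset : g.comp α * g.comp β ⊆ g.comp (α * β) :=
  Set.mul_subset_iff.2 fun _ hs _ ht => mul_mem_comp hs ht

theorem deg_eq_inv_of_mul_mul_self (h : s * t * s = s) (hs : s ≠ 0) :
    g.deg t = (g.deg s)⁻¹ := by
  have hst : s * t ≠ 0 := fun h0 => hs (by rw [← h, h0, zero_mul])
  have hdeg : g.deg (s * t) * g.deg s = g.deg s := by
    rw [← g.deg_mul _ _ (h.symm ▸ hs), h]
  rw [mul_eq_right, g.deg_mul s t hst] at hdeg
  exact eq_inv_of_mul_eq_one_right hdeg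

theorem mul_mem_comp_one_of_mul_mul_self (h : s * t * s = s) : t * s ∈ g.comp 1 := by
  rcases eq_or_ne s 0 with rfl | hs
  · exact Or.inl (mul_zero t)
  simpa using mul_mem_comp (Or.inr (deg_eq_inv_of_mul_mul_self h hs)) (mem_comp_deg s)

end Grading

namespace GrSet

variable {g : Grading Γ S} {X : Type*} [Zero X] (A : GrSet g X) {α β : Γ} {s a b : S}
  {x y : X}

def comp (α : Γ) : Set X := {x | x = 0 ∨ A.degX x = α}

theorem zero_mem_comp (α : Γ) : (0 : X) ∈ A.comp α := Or.inl rfl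

theorem mem_comp_degX (x : X) : x ∈ A.comp (A.degX x) := Or.inr rfl

theorem act_zero_right (s : S) : A.act s 0 = 0 := by
  rw [← A.act_zero 0, A.act_mul, mul_zero]

theorem act_mem_comp (hs : s ∈ g.comp α) (hx : x ∈ A.comp β) :
    A.act s x ∈ A.comp (α * β) := by
  by_cases hsx : A.act s x = 0
  · exact Or.inl hsx
  have hs0 : s ≠ 0 := by rintro rfl; exact hsx (A.act_zero x)
  have hx0 : x ≠ 0 := by rintro rfl; exact hsx (A.act_zero_right s)
  exact Or.inr (by rw [A.deg_act s x hsx, hs.resolve_left hs0, hx.resolve_left hx0])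

theorem degX_act_of_mem_comp_one (hx : x ∈ A.comp 1) (h : A.act s x ≠ 0) :
    A.degX (A.act s x) = g.deg s := by
  have hx0 : x ≠ 0 := by rintro rfl; exact h (A.act_zero_right s)
  rw [A.deg_act s x h, hx.resolve_left hx0, mul_one]

open Classical in
/-- The tensor `s ⊗ x` of `S ⊗_{S_ε} X_ε`; junk value `0 ⊗ 0` when `x ∉ X_ε`. -/
noncomputable def tmul (s : S) (x : X) : Quot (nuRel A) :=
  if hx : x ∈ A.comp 1 then Quot.mk _ (s, ⟨x, hx⟩) else Quot.mk _ (0, ⟨0, Or.inl rfl⟩)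

theorem tmul_of_mem (s : S) (hx : x ∈ A.comp 1) : A.tmul s x = Quot.mk _ (s, ⟨x, hx⟩) :=
  dif_pos hx

theorem nuMap_tmul (s : S) (hx : x ∈ A.comp 1) : nuMap A (A.tmul s x) = A.act s x := by
  rw [A.tmul_of_mem s hx]
  rfl

theorem tmul_mul (a : S) (hs : s ∈ g.comp 1) (hx : x ∈ A.comp 1) :
    A.tmul (a * s) x = A.tmul a (A.act s x) := by
  have hsx : A.act s x ∈ A.comp 1 := one_mul (1 : Γ) ▸ A.act_mem_comp hs hx
  rw [A.tmul_of_mem _ hx, A.tmul_of_mem _ hsx]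
  exact Quot.sound ⟨s, hs, rfl, rfl⟩

theorem tmul_zero_right (a : S) : A.tmul a 0 = A.tmul 0 0 :=
  calc A.tmul a 0 = A.tmul a (A.act 0 0) := by rw [A.act_zero]
    _ = A.tmul (a * 0) 0 := (A.tmul_mul a (g.zero_mem_comp 1) (A.zero_mem_comp 1)).symm
    _ = A.tmul 0 0 := by rw [mul_zero]

theorem tmul_eq_tmul_zero_of_act_eq_zero (hreg : ∀ s : S, ∃ t, s * t * s = s)
    (hx : x ∈ A.comp 1) (h : A.act a x = 0) : A.tmul a x = A.tmul 0 0 := by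
  obtain ⟨a', ha'⟩ := hreg a
  calc A.tmul a x = A.tmul (a * (a' * a)) x := by rw [← mul_assoc, ha']
    _ = A.tmul a (A.act a' (A.act a x)) := by
      rw [A.tmul_mul a (Grading.mul_mem_comp_one_of_mul_mul_self ha') hx, A.act_mul]
    _ = A.tmul 0 0 := by rw [h, A.act_zero_right, A.tmul_zero_right]

theorem tmul_eq_tmul_of_act_eq (hinv : IsInverseSemigroup S) (hx : x ∈ A.comp 1)
    (hy : y ∈ A.comp 1) (h : A.act a x = A.act b y) : A.tmul a x = A.tmul b y := by
  have hreg := hinv.exists_mul_mul_self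
  rcases eq_or_ne (A.act a x) 0 with h0 | h0
  · rw [A.tmul_eq_tmul_zero_of_act_eq_zero hreg hx h0,
      A.tmul_eq_tmul_zero_of_act_eq_zero hreg hy (h ▸ h0)]
  obtain ⟨a', ha'⟩ := hreg a
  obtain ⟨b', hb'⟩ := hreg b
  have ha0 : a ≠ 0 := by rintro rfl; exact h0 (A.act_zero x)
  have hb0 : b ≠ 0 := by rintro rfl; exact h0 (h.trans (A.act_zero y))
  have hdeg : g.deg a = g.deg b := by
    rw [← A.degX_act_of_mem_comp_one hx h0, h, A.degX_act_of_mem_comp_one hy (h ▸ h0)]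
  have ha'_mem : a' ∈ g.comp (g.deg a)⁻¹ := Or.inr (g.deg_eq_inv_of_mul_mul_self ha' ha0)
  have hb'_mem : b' ∈ g.comp (g.deg a)⁻¹ :=
    Or.inr (hdeg ▸ g.deg_eq_inv_of_mul_mul_self hb' hb0)
  have hab_mem : a' * b ∈ g.comp 1 := by
    simpa [hdeg] using Grading.mul_mem_comp ha'_mem (g.mem_comp_deg b)
  have hbaab_mem : b' * (a * (a' * b)) ∈ g.comp 1 := by
    simpa using Grading.mul_mem_comp hb'_mem (Grading.mul_mem_comp (g.mem_comp_deg a) hab_mem)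
  have hidem {c c' : S} (hc : c * c' * c = c) : IsIdempotentElem (c * c') := by
    rw [IsIdempotentElem, ← mul_assoc, hc]
  have hmove : b * (b' * (a * (a' * b))) = a * (a' * b) :=
    calc b * (b' * (a * (a' * b))) = b * b' * (a * a' * b) := by simp only [mul_assoc]
      _ = a * a' * (b * b' * b) :=
        (hinv.commute_of_isIdempotentElem (hidem hb') (hidem ha')).left_comm b
      _ = a * (a' * b) := by rw [hb', mul_assoc]
  have hact : A.act (b' * (a * (a' * b))) y = A.act (b' * b) y :=
    calc A.act (b' * (a * (a' * b))) y = A.act b' (A.act (a * a') (A.act a x)) := by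
          simp only [h, A.act_mul, mul_assoc]
      _ = A.act (b' * b) y := by rw [A.act_mul (a * a'), ha', h, A.act_mul]
  calc A.tmul a x = A.tmul (a * (a' * a)) x := by rw [← mul_assoc, ha']
    _ = A.tmul a (A.act (a' * b) y) := by
      rw [A.tmul_mul a (Grading.mul_mem_comp_one_of_mul_mul_self ha') hx, ← A.act_mul, h,
        A.act_mul]
    _ = A.tmul (b * (b' * (a * (a' * b)))) y := by rw [hmove, A.tmul_mul a hab_mem hy]
    _ = A.tmul b (A.act (b' * b) y) := by
      rw [A.tmul_mul b hbaab_mem hy, hact]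
    _ = A.tmul b y := by
      rw [← A.tmul_mul b (Grading.mul_mem_comp_one_of_mul_mul_self hb') hy, ← mul_assoc, hb']

theorem nuMap_injective (hinv : IsInverseSemigroup S) : Function.Injective (nuMap A) := by
  rintro ⟨a, x, hx⟩ ⟨b, y, hy⟩ h
  rw [← A.tmul_of_mem a hx, ← A.tmul_of_mem b hy] at h ⊢
  rw [A.nuMap_tmul a hx, A.nuMap_tmul b hy] at h
  exact A.tmul_eq_tmul_of_act_eq hinv hx hy h

theorem nuMap_surjective (hreg : ∀ s : S, ∃ t, s * t * s = s) (hg : g.IsStrong)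
    (hA : ∀ x : X, ∃ (s : S) (y : X), A.act s y = x) : Function.Surjective (nuMap A) := by
  intro x
  obtain ⟨s, y, rfl⟩ := hA x
  obtain ⟨s', hs'⟩ := hreg s
  have hsplit : s' * s ∈ g.comp (A.degX y) * g.comp (A.degX y)⁻¹ := by
    rw [hg, mul_inv_cancel]
    exact Grading.mul_mem_comp_one_of_mul_mul_self hs'
  obtain ⟨p, -, q, hq, hpq : p * q = s' * s⟩ := hsplit
  have hqy : A.act q y ∈ A.comp 1 :=
    inv_mul_cancel (A.degX y) ▸ A.act_mem_comp hq (A.mem_comp_degX y)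
  refine ⟨A.tmul (s * p) (A.act q y), ?_⟩
  rw [A.nuMap_tmul _ hqy, A.act_mul, mul_assoc, hpq, ← mul_assoc, hs']

end GrSet

namespace Grading

variable (g : Grading Γ S)

def shift (β : Γ) : GrSet g S where
  act s x := s * x
  act_mul s t x := (mul_assoc s t x).symm
  act_zero x := zero_mul x
  degX x := g.deg x * β⁻¹
  deg_act s x h := by
    show g.deg (s * x) * β⁻¹ = g.deg s * (g.deg x * β⁻¹)
    rw [g.deg_mul s x h, mul_assoc]

theorem shift_comp (β γ : Γ) : (g.shift β).comp γ = g.comp (γ * β) := by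
  ext x
  simp only [GrSet.comp, comp, shift, Set.mem_ofPred_eq, mul_inv_eq_iff_eq_mul]

theorem shift_unital (hreg : ∀ s : S, ∃ t, s * t * s = s) (β : Γ) (x : S) :
    ∃ (s y : S), (g.shift β).act s y = x :=
  let ⟨t, ht⟩ := hreg x
  ⟨x, t * x, (mul_assoc x t x).symm.trans ht⟩

theorem isStrong_of_surjective_nuMap_shift
    (h : ∀ β : Γ, Function.Surjective (nuMap (g.shift β))) : g.IsStrong := by
  intro α β
  refine comp_mul_comp_subset.antisymm fun r hr => ?_
  rcases eq_or_ne r 0 with rfl | hr0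
  · exact ⟨0, g.zero_mem_comp α, 0, g.zero_mem_comp β, mul_zero 0⟩
  obtain ⟨⟨s, u, hu⟩, hsu : s * u = r⟩ := h β r
  have hu : u ∈ g.comp β := by rw [← one_mul β, ← g.shift_comp]; exact hu
  refine ⟨s, Or.inr ?_, u, hu, hsu⟩
  have hu0 : u ≠ 0 := by rintro rfl; exact hr0 (hsu ▸ mul_zero s)
  have hdeg := g.deg_mul s u (hsu ▸ hr0)
  rw [hsu, hr.resolve_left hr0, hu.resolve_left hu0] at hdeg
  exact (mul_right_cancel hdeg).symm

end Grading

/-- **Dade's theorem for inverse semigroups** (Theorem `dadesthm`): a `Γ`-graded inverse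
semigroup `S` is strongly graded if and only if the categories `Gr-S` and `Mod-S_ε` are
equivalent via the restriction and induction functors; equivalently (as formulated
here, with the natural transformation `μ` always being an isomorphism), iff the natural
map `ν_X : S ⊗_{S_ε} X_ε → X`, `s ⊗ x ↦ sx`, is bijective for every unital `Γ`-graded
left `S`-set `X`. -/
theorem dade_for_inverse_semigroups {Γ' : Type u} [Group Γ'] {S' : Type v}
    [SemigroupWithZero S'] (g : Grading Γ' S')
    (hinv : ∀ s : S', ∃! t : S', s * t * s = s ∧ t * s * t = t) :
    g.IsStrong ↔
      ∀ (X : Type v) (_inst : Zero X) (A : GrSet g X),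
        (∀ x : X, ∃ (s : S') (y : X), A.act s y = x) →
        Function.Bijective (nuMap A) := by
  have hinv : IsInverseSemigroup S' := hinv
  have hreg := hinv.exists_mul_mul_self
  refine ⟨fun hg X _ A hA => ⟨A.nuMap_injective hinv, A.nuMap_surjective hreg hg hA⟩,
    fun h => g.isStrong_of_surjective_nuMap_shift fun β => ?_⟩
  exact (h S' _ (g.shift β) (g.shift_unital hreg β)).2
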